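/- arXiv:2308.02241 — 5 statements merged into one kernel-verified Lean document; each statement's English description precedes it below -/
import Mathlib

section
/- Let Z be a standard normal random variable, a > 0, b ≥ 0. Then E[a²·cos(bZ)/(a²+Z²)] = a·√(2π)·e^{a²/2}·(cosh(ab) − (1/2)(e^{−ab}Φ(a−b) + e^{ab}Φ(a+b))), where Φ is the standard normal CDF. -/
open MeasureTheory ProbabilityTheory Real

/-- Standard normal cumulative distribution function. -/
noncomputable def stdNormalCDF (x : ℝ) : ℝ :=
  ∫ u in Set.Iic x, Real.exp (-u ^ 2 / 2) / Real.sqrt (2 * Real.pi)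

/-!
Since `a / (a² + z²) = ∫₀^∞ e^{-as} cos (sz) ds`, Fubini turns the expectation into
`∫₀^∞ a e^{-as} 𝔼[cos (bZ) cos (sZ)] ds`. The Gaussian characteristic function gives
`𝔼[cos (bZ) cos (sZ)] = (e^{-(s+b)²/2} + e^{-(s-b)²/2}) / 2`, and completing the square,
`∫₀^∞ e^{-as} e^{-(s+c)²/2} ds = e^{a²/2 + ac} √(2π) (1 - Φ(a + c))`.
-/

open Set

lemma integral_cos_mul_gaussianReal (v : NNReal) (t : ℝ) :
    ∫ x, cos (t * x) ∂gaussianReal 0 v = exp (-(v * t ^ 2) / 2) := by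
  have hint : Integrable (fun x : ℝ ↦ Complex.exp (t * x * Complex.I)) (gaussianReal 0 v) :=
    (integrable_const (1 : ℝ)).mono' (by fun_prop) (ae_of_all _ fun x ↦ by
      simpa using (Complex.norm_exp_ofReal_mul_I (t * x)).le)
  have h := integral_re hint
  simp only [RCLike.re_to_complex, ← charFun_apply_real, charFun_gaussianReal] at h
  simpa [Complex.exp_ofReal_mul_I_re, ← Complex.ofReal_mul, Complex.exp_re,
    ← Complex.ofReal_pow, neg_div] using h

lemma integral_exp_neg_mul_mul_cos_Ioi {a : ℝ} (ha : 0 < a) (z : ℝ) :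
    ∫ s in Ioi 0, exp (-(a * s)) * cos (s * z) = a / (a ^ 2 + z ^ 2) := by
  have hre : (-a + z * Complex.I).re < 0 := by simpa using ha
  have h := integral_re (integrableOn_exp_mul_complex_Ioi hre 0)
  simp only [RCLike.re_to_complex, integral_exp_mul_complex_Ioi hre 0] at h
  convert h using 1
  · refine integral_congr_ae (ae_of_all _ fun s ↦ ?_)
    simp [Complex.exp_re, mul_comm s z]
  · simp [Complex.div_re, Complex.normSq]
    field_simp

lemma setIntegral_Ioi_comp_add_right {E : Type*} [NormedAddCommGroup E] [NormedSpace ℝ E]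
    (g : ℝ → E) (c d : ℝ) : ∫ x in Ioi c, g (x + d) = ∫ x in Ioi (c + d), g x := by
  have hpre : (· + d) ⁻¹' Ioi (c + d) = Ioi c := by ext x; simp
  rw [← hpre, (measurePreserving_add_right volume d).setIntegral_preimage_emb
    (measurableEmbedding_addRight d)]

lemma integrable_exp_neg_sq_div_two : Integrable fun u : ℝ ↦ exp (-u ^ 2 / 2) := by
  simpa [neg_div, div_eq_inv_mul] using integrable_exp_neg_mul_sq (b := 1 / 2) (by norm_num)

lemma integral_exp_neg_sq_div_two : ∫ u : ℝ, exp (-u ^ 2 / 2) = √(2 * π) := by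
  simpa [neg_div, div_eq_inv_mul, mul_comm] using integral_gaussian (1 / 2)

lemma integral_Ioi_exp_neg_sq_div_two (x : ℝ) :
    ∫ u in Ioi x, exp (-u ^ 2 / 2) = √(2 * π) * (1 - stdNormalCDF x) := by
  have hsplit := intervalIntegral.integral_Iic_add_Ioi (b := x)
    integrable_exp_neg_sq_div_two.integrableOn integrable_exp_neg_sq_div_two.integrableOn
  have hπ : 0 < √(2 * π) := by positivity
  rw [integral_exp_neg_sq_div_two] at hsplit
  rw [stdNormalCDF, integral_div, mul_sub, mul_one, mul_div_cancel₀ _ hπ.ne']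
  linarith

lemma exp_neg_mul_mul_exp_neg_sq (a c s : ℝ) :
    exp (-(a * s)) * exp (-(s + c) ^ 2 / 2)
      = exp (a ^ 2 / 2 + a * c) * exp (-(s + (a + c)) ^ 2 / 2) := by
  rw [← exp_add, ← exp_add]; ring_nf

lemma integrable_exp_neg_mul_mul_exp_neg_sq (a c : ℝ) :
    Integrable fun s ↦ exp (-(a * s)) * exp (-(s + c) ^ 2 / 2) := by
  simpa only [exp_neg_mul_mul_exp_neg_sq] using
    (integrable_exp_neg_sq_div_two.comp_add_right (a + c)).const_mul _

lemma integral_Ioi_exp_neg_mul_mul_exp_neg_sq (a c : ℝ) :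
    ∫ s in Ioi 0, exp (-(a * s)) * exp (-(s + c) ^ 2 / 2)
      = exp (a ^ 2 / 2 + a * c) * (√(2 * π) * (1 - stdNormalCDF (a + c))) := by
  simp only [exp_neg_mul_mul_exp_neg_sq, integral_const_mul]
  rw [setIntegral_Ioi_comp_add_right (fun u ↦ exp (-u ^ 2 / 2)), zero_add,
    integral_Ioi_exp_neg_sq_div_two]

lemma integrable_cos_mul {μ : Measure ℝ} [IsFiniteMeasure μ] (t : ℝ) :
    Integrable (fun z ↦ cos (t * z)) μ :=
  (integrable_const (1 : ℝ)).mono' (by fun_prop) (ae_of_all _ fun z ↦ abs_cos_le_one _)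

lemma integral_cos_mul_mul_cos_mul_gaussianReal (b s : ℝ) :
    ∫ z, cos (b * z) * cos (s * z) ∂gaussianReal 0 1
      = (exp (-(s + b) ^ 2 / 2) + exp (-(s + -b) ^ 2 / 2)) / 2 := by
  have hprod : ∀ z, cos (b * z) * cos (s * z) = (cos ((s + b) * z) + cos ((s + -b) * z)) / 2 := by
    intro z
    rw [add_mul, add_mul, cos_add, cos_add, neg_mul, cos_neg, sin_neg]
    ring
  simp only [hprod, integral_div]
  rw [integral_add (integrable_cos_mul _) (integrable_cos_mul _), integral_cos_mul_gaussianReal,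
    integral_cos_mul_gaussianReal, NNReal.coe_one, one_mul, one_mul]

lemma integrable_mul_cos_mul_exp_neg_mul_mul_cos_prod {μ : Measure ℝ} [IsFiniteMeasure μ]
    {a : ℝ} (ha : 0 < a) (b : ℝ) :
    Integrable (fun p : ℝ × ℝ ↦ a * cos (b * p.1) * (exp (-(a * p.2)) * cos (p.2 * p.1)))
      (μ.prod (volume.restrict (Ioi 0))) := by
  have hexp : Integrable (fun s ↦ a * exp (-(a * s))) (volume.restrict (Ioi 0)) := by
    simpa using (integrableOn_exp_mul_Ioi (neg_neg_of_pos ha) 0).const_mul a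
  refine ((integrable_const (1 : ℝ)).mul_prod hexp).mono' (by fun_prop) (ae_of_all _ fun p ↦ ?_)
  simp only [norm_mul, norm_eq_abs, abs_of_pos ha, abs_exp, one_mul]
  calc a * |cos (b * p.1)| * (exp (-(a * p.2)) * |cos (p.2 * p.1)|)
      ≤ a * 1 * (exp (-(a * p.2)) * 1) := by gcongr <;> exact abs_cos_le_one _
    _ = a * exp (-(a * p.2)) := by ring

theorem normal_expectation_cos_general (a b : ℝ) (ha : 0 < a) :
    ∫ z, a ^ 2 * Real.cos (b * z) / (a ^ 2 + z ^ 2) ∂(gaussianReal 0 1) =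
      a * Real.sqrt (2 * Real.pi) * Real.exp (a ^ 2 / 2) *
        (Real.cosh (a * b) -
          (1 / 2) * (Real.exp (-(a * b)) * stdNormalCDF (a - b) +
            Real.exp (a * b) * stdNormalCDF (a + b))) := by
  let f : ℝ → ℝ → ℝ := fun z s ↦ a * cos (b * z) * (exp (-(a * s)) * cos (s * z))
  have hlaplace : ∀ z, a ^ 2 * cos (b * z) / (a ^ 2 + z ^ 2) = ∫ s in Ioi 0, f z s := by
    intro z
    rw [integral_const_mul, integral_exp_neg_mul_mul_cos_Ioi ha]
    field_simp
  have hinner : ∀ s, ∫ z, f z s ∂gaussianReal 0 1 = a / 2 *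
      (exp (-(a * s)) * exp (-(s + b) ^ 2 / 2) + exp (-(a * s)) * exp (-(s + -b) ^ 2 / 2)) := by
    intro s
    have hf : ∀ z, f z s = a * exp (-(a * s)) * (cos (b * z) * cos (s * z)) := fun z ↦ by ring
    simp only [hf, integral_const_mul, integral_cos_mul_mul_cos_mul_gaussianReal]
    ring
  calc ∫ z, a ^ 2 * cos (b * z) / (a ^ 2 + z ^ 2) ∂gaussianReal 0 1
      = ∫ z, (∫ s in Ioi 0, f z s) ∂gaussianReal 0 1 :=
        integral_congr_ae (ae_of_all _ hlaplace)
    _ = ∫ s in Ioi 0, (∫ z, f z s ∂gaussianReal 0 1) :=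
        integral_integral_swap (integrable_mul_cos_mul_exp_neg_mul_mul_cos_prod ha b)
    _ = a / 2 * ((exp (a ^ 2 / 2 + a * b) * (√(2 * π) * (1 - stdNormalCDF (a + b))))
          + exp (a ^ 2 / 2 + a * -b) * (√(2 * π) * (1 - stdNormalCDF (a + -b)))) := by
      simp only [hinner, integral_const_mul]
      rw [integral_add (integrable_exp_neg_mul_mul_exp_neg_sq a b).integrableOn
        (integrable_exp_neg_mul_mul_exp_neg_sq a (-b)).integrableOn,
        integral_Ioi_exp_neg_mul_mul_exp_neg_sq, integral_Ioi_exp_neg_mul_mul_exp_neg_sq]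
    _ = _ := by
      rw [cosh_eq, exp_add, exp_add, ← sub_eq_add_neg, mul_neg]
      ring

theorem normal_expectation_cos (a b : ℝ) (ha : 0 < a) (hb : 0 ≤ b) :
    ∫ z, a ^ 2 * Real.cos (b * z) / (a ^ 2 + z ^ 2) ∂(gaussianReal 0 1) =
      a * Real.sqrt (2 * Real.pi) * Real.exp (a ^ 2 / 2) *
        (Real.cosh (a * b) -
          (1 / 2) * (Real.exp (-(a * b)) * stdNormalCDF (a - b) +
            Real.exp (a * b) * stdNormalCDF (a + b))) :=
  normal_expectation_cos_general a b ha
end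

section
/- Let X be an ℝᵈ-valued random variable and define ρ(y) := limsup_{ε→0⁺} P(X ∈ B_{ε,∞}(y))/vol(B_{ε,∞}(0)) ∈ [0,∞], where B_{ε,∞}(y) is the open ℓ^∞-ball of radius ε around y. If ρ is locally bounded, then the law of X is absolutely continuous with respect to Lebesgue measure and ρ is a version of its density, i.e. P(X ∈ A) = ∫_A ρ(x) dx for every Borel set A ⊆ ℝᵈ. -/
/-! By Besicovitch's differentiation theorem, `μ (closedBall x r) / vol (closedBall x r)` tends to
the Radon–Nikodym derivative `dμ/dvol` at vol-almost every `x`; squeezing an open ball between two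
closed ones of comparable volume shows that the open-ball ratio has the same limit, so `ρ = dμ/dvol`
almost everywhere. Finiteness of `ρ` at a point `x` bounds `μ (closedBall x r)` by a multiple of
`vol (closedBall x r)` for small `r`, and a Vitali covering argument turns these local bounds into
`μ N = 0` for every vol-null set `N`. Hence `μ ≪ vol`, and `μ` is the measure with density `ρ`. -/

open MeasureTheory Filter Metric Topology Module
open scoped ENNReal NNReal

lemma tendsto_nhdsGT_zero_const_mul {t : ℝ} (ht : 0 < t) :
    Tendsto (t * ·) (𝓝[>] (0 : ℝ)) (𝓝[>] 0) := by
  have := tendsto_comap (f := fun ε : ℝ => t * ε) (x := 𝓝[>] 0)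
  rwa [comap_mulLeft_nhdsGT_zero ht] at this

section Besicovitch

variable {β : Type*} [MetricSpace β] [MeasurableSpace β] [BorelSpace β]
  [SecondCountableTopology β] [HasBesicovitchCovering β]

lemma absolutelyContinuous_of_frequently_measure_closedBall_le {μ ν : Measure β}
    [IsLocallyFiniteMeasure μ] [IsLocallyFiniteMeasure ν]
    (h : ∀ x, ∃ C : ℝ≥0, ∃ᶠ r in 𝓝[>] 0, μ (closedBall x r) ≤ C * ν (closedBall x r)) :
    μ ≪ ν := by
  intro N hN
  let s (k : ℕ) : Set β :=
    {x ∈ N | ∃ᶠ r in 𝓝[>] 0, μ (closedBall x r) ≤ ((k : ℝ≥0) • ν) (closedBall x r)}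
  have hcover : N ⊆ ⋃ k, s k := fun x hx => by
    obtain ⟨C, hC⟩ := h x
    obtain ⟨k, hk⟩ := exists_nat_ge C
    refine Set.mem_iUnion.2 ⟨k, hx, hC.mono fun r hr => hr.trans ?_⟩
    rw [Measure.smul_apply, ENNReal.smul_def, smul_eq_mul]
    gcongr
  refine measure_mono_null hcover (measure_iUnion_null fun k => le_antisymm ?_ bot_le)
  calc μ (s k) ≤ ((k : ℝ≥0) • ν) (s k) :=
        (Besicovitch.vitaliFamily μ).measure_le_of_frequently_le _ Measure.AbsolutelyContinuous.rfl
          _ fun x hx => (Besicovitch.tendsto_filterAt μ x).frequently hx.2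
    _ ≤ ((k : ℝ≥0) • ν) N := measure_mono fun x hx => hx.1
    _ = 0 := by simp [hN]

end Besicovitch

section UpperDensity

variable {E : Type*} [NormedAddCommGroup E] [NormedSpace ℝ E] [FiniteDimensional ℝ E]
  [MeasurableSpace E] [BorelSpace E]

noncomputable def upperDensity (μ ν : Measure E) (x : E) : ℝ≥0∞ :=
  limsup (fun ε : ℝ => μ (ball x ε) / ν (ball 0 ε)) (𝓝[>] 0)

variable (ν : Measure E) [ν.IsAddHaarMeasure] {μ : Measure E}

lemma addHaar_closedBall_eq_ball_zero (x : E) {r : ℝ} (hr : 0 < r) :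
    ν (closedBall x r) = ν (ball 0 r) := by
  rw [Measure.addHaar_closedBall ν x hr.le, Measure.addHaar_ball_of_pos ν 0 hr]

lemma tendsto_measure_ball_div_of_tendsto_closedBall {x : E} {L : ℝ≥0∞}
    (hx : Tendsto (fun r => μ (closedBall x r) / ν (closedBall x r)) (𝓝[>] 0) (𝓝 L)) :
    Tendsto (fun ε => μ (ball x ε) / ν (ball 0 ε)) (𝓝[>] 0) (𝓝 L) := by
  set n := finrank ℝ E
  refine tendsto_order.2 ⟨fun c hc => ?_, fun c hc => ?_⟩
  · -- shrinking the radius by a factor `t < 1` costs only the factor `t ^ n` in volume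
    have hscale : Tendsto (fun t : ℝ => ENNReal.ofReal (t ^ n) * L) (𝓝[<] 1) (𝓝 L) := by
      have : Tendsto (fun t : ℝ => ENNReal.ofReal (t ^ n)) (𝓝[<] 1) (𝓝 1) := by
        simpa using (ENNReal.tendsto_ofReal ((continuous_pow n).tendsto (1 : ℝ))).mono_left
          nhdsWithin_le_nhds
      simpa using ENNReal.Tendsto.mul_const this (Or.inl one_ne_zero)
    obtain ⟨t, hct, ht⟩ :=
      ((hscale.eventually (lt_mem_nhds hc)).and (Ioo_mem_nhdsLT zero_lt_one)).exists
    have htn : ENNReal.ofReal (t ^ n) ≠ 0 := (ENNReal.ofReal_pos.2 (pow_pos ht.1 n)).ne'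
    have hlim : Tendsto (fun ε => ENNReal.ofReal (t ^ n) *
        (μ (closedBall x (t * ε)) / ν (closedBall x (t * ε)))) (𝓝[>] 0)
        (𝓝 (ENNReal.ofReal (t ^ n) * L)) :=
      ENNReal.Tendsto.const_mul (hx.comp (tendsto_nhdsGT_zero_const_mul ht.1))
        (Or.inr ENNReal.ofReal_ne_top)
    filter_upwards [hlim.eventually (lt_mem_nhds hct), self_mem_nhdsWithin]
      with ε hε (hε0 : 0 < ε)
    refine hε.trans_le ?_
    calc ENNReal.ofReal (t ^ n) * (μ (closedBall x (t * ε)) / ν (closedBall x (t * ε)))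
        = μ (closedBall x (t * ε)) / ν (ball 0 ε) := by
          rw [addHaar_closedBall_eq_ball_zero ν x (mul_pos ht.1 hε0),
            Measure.addHaar_ball_mul_of_pos ν 0 ht.1, ← mul_div_assoc,
            ENNReal.mul_div_mul_left _ _ htn ENNReal.ofReal_ne_top]
      _ ≤ μ (ball x ε) / ν (ball 0 ε) := by
          gcongr
          exact closedBall_subset_ball (mul_lt_of_lt_one_left hε0 ht.2)
  · filter_upwards [hx.eventually (gt_mem_nhds hc), self_mem_nhdsWithin] with ε hε (hε0 : 0 < ε)
    refine lt_of_le_of_lt ?_ hε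
    rw [addHaar_closedBall_eq_ball_zero ν x hε0]
    gcongr
    exact ball_subset_closedBall

lemma upperDensity_ae_eq_rnDeriv [IsLocallyFiniteMeasure μ] :
    upperDensity μ ν =ᵐ[ν] μ.rnDeriv ν := by
  filter_upwards [Besicovitch.ae_tendsto_rnDeriv μ ν] with x hx
  exact (tendsto_measure_ball_div_of_tendsto_closedBall ν hx).limsup_eq

lemma exists_measure_closedBall_le_of_upperDensity_lt_top {x : E}
    (hx : upperDensity μ ν x < ∞) :
    ∃ C : ℝ≥0, ∀ᶠ r in 𝓝[>] 0, μ (closedBall x r) ≤ C * ν (closedBall x r) := by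
  set M : ℝ≥0 := (upperDensity μ ν x).toNNReal + 1
  have hM : upperDensity μ ν x < M := by
    rw [← ENNReal.coe_toNNReal hx.ne]
    exact_mod_cast lt_add_one _
  refine ⟨M * 2 ^ finrank ℝ E, ?_⟩
  filter_upwards [eventually_nhdsGT_zero_mul_left two_pos (eventually_lt_of_limsup_lt hM),
    self_mem_nhdsWithin] with r hr (hr0 : 0 < r)
  calc μ (closedBall x r) ≤ μ (ball x (2 * r)) :=
        measure_mono (closedBall_subset_ball (by linarith))
    _ ≤ M * ν (ball 0 (2 * r)) :=
        (ENNReal.div_le_iff_le_mul (Or.inr ENNReal.coe_ne_top) (Or.inr (by simp [M]))).1 hr.le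
    _ = (M * 2 ^ finrank ℝ E : ℝ≥0) * ν (closedBall x r) := by
        rw [Measure.addHaar_ball_mul_of_pos ν 0 two_pos, addHaar_closedBall_eq_ball_zero ν x hr0,
          ENNReal.ofReal_pow zero_le_two, ENNReal.ofReal_ofNat]
        push_cast
        ring

lemma isLocallyFiniteMeasure_of_upperDensity_lt_top (h : ∀ x, upperDensity μ ν x < ∞) :
    IsLocallyFiniteMeasure μ where
  finiteAtNhds x := by
    obtain ⟨C, hC⟩ := exists_measure_closedBall_le_of_upperDensity_lt_top ν (h x)
    obtain ⟨r, hr, hr0⟩ := (hC.and self_mem_nhdsWithin).exists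
    exact ⟨closedBall x r, closedBall_mem_nhds x hr0,
      hr.trans_lt (ENNReal.mul_lt_top ENNReal.coe_lt_top measure_closedBall_lt_top)⟩

theorem withDensity_upperDensity_eq (h : ∀ x, upperDensity μ ν x < ∞) :
    ν.withDensity (upperDensity μ ν) = μ := by
  have : IsLocallyFiniteMeasure μ := isLocallyFiniteMeasure_of_upperDensity_lt_top ν h
  have hac : μ ≪ ν := absolutelyContinuous_of_frequently_measure_closedBall_le fun x =>
    (exists_measure_closedBall_le_of_upperDensity_lt_top ν (h x)).imp fun _ hC => hC.frequently
  rw [withDensity_congr_ae (upperDensity_ae_eq_rnDeriv ν), Measure.withDensity_rnDeriv_eq μ ν hac]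

end UpperDensity

theorem density_from_limsup_general {Ω : Type*} [MeasureSpace Ω] (P : Measure Ω) (d : ℕ)
    (X : Ω → (Fin d → ℝ)) (ρ : (Fin d → ℝ) → ENNReal)
    (hρ : ∀ y, ρ y = Filter.limsup
      (fun ε : ℝ => Measure.map X P (Metric.ball y ε) /
        volume (Metric.ball (0 : Fin d → ℝ) ε)) (nhdsWithin 0 (Set.Ioi 0)))
    (hloc : ∀ K : Set (Fin d → ℝ), IsCompact K →
      ∃ M : ENNReal, M < ⊤ ∧ ∀ y ∈ K, ρ y ≤ M) :
    ∀ A : Set (Fin d → ℝ), MeasurableSet A →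
      Measure.map X P A = ∫⁻ x in A, ρ x := by
  intro A hA
  have hρ_eq : ρ = upperDensity (P.map X) volume := funext hρ
  have hfinite : ∀ y, upperDensity (P.map X) volume y < ∞ := fun y => by
    obtain ⟨M, hM, hρM⟩ := hloc {y} isCompact_singleton
    exact hρ_eq ▸ (hρM y rfl).trans_lt hM
  rw [← withDensity_apply _ hA, hρ_eq, withDensity_upperDensity_eq volume hfinite]

theorem density_from_limsup {Ω : Type*} [MeasureSpace Ω] (P : Measure Ω)
    [IsProbabilityMeasure P] (d : ℕ) (hd : 0 < d)
    (X : Ω → (Fin d → ℝ)) (hX : Measurable X)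
    (ρ : (Fin d → ℝ) → ENNReal)
    (hρ : ∀ y, ρ y = Filter.limsup
      (fun ε : ℝ => Measure.map X P (Metric.ball y ε) /
        volume (Metric.ball (0 : Fin d → ℝ) ε)) (nhdsWithin 0 (Set.Ioi 0)))
    (hloc : ∀ K : Set (Fin d → ℝ), IsCompact K →
      ∃ M : ENNReal, M < ⊤ ∧ ∀ y ∈ K, ρ y ≤ M) :
    ∀ A : Set (Fin d → ℝ), MeasurableSet A →
      Measure.map X P A = ∫⁻ x in A, ρ x :=
  density_from_limsup_general P d X ρ hρ hloc
end

section
/- Let Y be an ℝᵈ-valued random variable and F : ℝᵈ → ℝᵈ a globally Lipschitz function with Lipschitz constant L (with respect to the sup-norm). If F(Y) has a density ρ that is locally bounded, then Y has a density and there is a version ρ^Y of the density of Y satisfying ρ^Y(y) ≤ Lᵈ·ρ(F(y)) for all y ∈ ℝᵈ. -/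
/-!
An `L`-Lipschitz map of `ℝᵈ` (sup norm) enlarges `d`-dimensional Hausdorff measure, which is
Lebesgue measure, by at most `Lᵈ`. Hence for every measurable `s`,
`P(Y ∈ s) ≤ P(F(Y) ∈ F(s)) = ∫_{F(s)} ρ ≤ Lᵈ ∫_s ρ ∘ F`, even though `F(s)` need not be
measurable. So the law of `Y` is dominated by the measure with density `Lᵈ · ρ ∘ F`: it is
absolutely continuous, and its Radon–Nikodym derivative capped by `Lᵈ · ρ ∘ F` is the
required version of its density.
-/

open MeasureTheory Set

open scoped ENNReal NNReal

theorem LipschitzWith.volume_image_le {ι : Type*} [Fintype ι] {K : ℝ≥0}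
    {f : (ι → ℝ) → (ι → ℝ)} (hf : LipschitzWith K f) (s : Set (ι → ℝ)) :
    volume (f '' s) ≤ (K : ℝ≥0∞) ^ Fintype.card ι * volume s := by
  simpa only [hausdorffMeasure_pi_real, ENNReal.rpow_natCast]
    using hf.hausdorffMeasure_image_le (Nat.cast_nonneg (Fintype.card ι)) s

namespace MeasureTheory

section ImageBound

variable {α β : Type*} [MeasurableSpace α] [MeasurableSpace β] {μ : Measure α} {ν : Measure β}
  {f : α → β} {c : ℝ≥0∞}

theorem Measure.restrict_image_le_smul_map (hf : Measurable f)
    (himage : ∀ t, ν (f '' t) ≤ c * μ t) (s : Set α) :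
    ν.restrict (f '' s) ≤ c • (μ.restrict s).map f := by
  refine Measure.le_iff.2 fun t ht => ?_
  rw [Measure.restrict_apply ht, Measure.smul_apply, Measure.map_apply hf ht,
    Measure.restrict_apply (hf ht), smul_eq_mul]
  calc ν (t ∩ f '' s) = ν (f '' (f ⁻¹' t ∩ s)) := by rw [image_preimage_inter]
    _ ≤ c * μ (f ⁻¹' t ∩ s) := himage _

theorem setLIntegral_image_le (hf : Measurable f) (himage : ∀ t, ν (f '' t) ≤ c * μ t)
    (s : Set α) (g : β → ℝ≥0∞) :
    ∫⁻ x in f '' s, g x ∂ν ≤ c * ∫⁻ y in s, g (f y) ∂μ :=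
  calc ∫⁻ x in f '' s, g x ∂ν ≤ ∫⁻ x, g x ∂(c • (μ.restrict s).map f) :=
        lintegral_mono' (Measure.restrict_image_le_smul_map hf himage s) le_rfl
    _ = c * ∫⁻ x, g x ∂(μ.restrict s).map f := lintegral_smul_measure c g
    _ ≤ c * ∫⁻ y in s, g (f y) ∂μ := by gcongr; exact lintegral_map_le g f

theorem map_le_withDensity_comp_of_map_comp_eq_withDensity [SFinite ν] {Ω : Type*}
    [MeasurableSpace Ω] {P : Measure Ω} {Y : Ω → α} (hY : AEMeasurable Y P) (hf : Measurable f)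
    (himage : ∀ t, ν (f '' t) ≤ c * μ t) {ρ : β → ℝ≥0∞}
    (hdens : P.map (f ∘ Y) = ν.withDensity ρ) :
    P.map Y ≤ μ.withDensity fun y => c * ρ (f y) := by
  refine Measure.le_iff.2 fun s hs => ?_
  calc P.map Y s ≤ (P.map Y).map f (f '' s) := Measure.le_map_apply_image hf.aemeasurable s
    _ = ∫⁻ x in f '' s, ρ x ∂ν := by
        rw [AEMeasurable.map_map_of_aemeasurable hf.aemeasurable hY, hdens,
          withDensity_apply' ρ]
    _ ≤ c * ∫⁻ y in s, ρ (f y) ∂μ := setLIntegral_image_le hf himage s ρ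
    _ ≤ ∫⁻ y in s, c * ρ (f y) ∂μ := lintegral_const_mul_le c _
    _ = μ.withDensity (fun y => c * ρ (f y)) s := (withDensity_apply _ hs).symm

end ImageBound

theorem Measure.exists_eq_withDensity_le_of_le_withDensity {α : Type*} [MeasurableSpace α]
    {μ ν : Measure α} [SigmaFinite μ] [SigmaFinite ν] {h : α → ℝ≥0∞}
    (hle : μ ≤ ν.withDensity h) : ∃ g : α → ℝ≥0∞, μ = ν.withDensity g ∧ ∀ x, g x ≤ h x := by
  have hac : μ ≪ ν :=
    (Measure.absolutelyContinuous_of_le hle).trans (withDensity_absolutelyContinuous ν h)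
  have hrn : μ.rnDeriv ν ≤ᵐ[ν] h :=
    ae_le_of_forall_setLIntegral_le_of_sigmaFinite (μ.measurable_rnDeriv ν) fun s hs _ =>
      (Measure.setLIntegral_rnDeriv_le s).trans <|
        (Measure.le_iff'.1 hle s).trans_eq (withDensity_apply h hs)
  refine ⟨fun x => min (μ.rnDeriv ν x) (h x), ?_, fun x => min_le_right _ _⟩
  rw [withDensity_congr_ae (hrn.mono fun x hx => min_eq_left hx),
    Measure.withDensity_rnDeriv_eq _ _ hac]

end MeasureTheory

theorem density_transfer_lipschitz_general {Ω : Type*} [MeasureSpace Ω] (P : Measure Ω)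
    [IsProbabilityMeasure P] (d : ℕ)
    (Y : Ω → (Fin d → ℝ)) (hY : Measurable Y)
    (F : (Fin d → ℝ) → (Fin d → ℝ)) (L : NNReal) (hF : LipschitzWith L F)
    (ρ : (Fin d → ℝ) → ENNReal)
    (hdens : Measure.map (fun ω => F (Y ω)) P = volume.withDensity ρ) :
    ∃ ρY : (Fin d → ℝ) → ENNReal,
      Measure.map Y P = volume.withDensity ρY ∧
      ∀ y, ρY y ≤ (L : ENNReal) ^ d * ρ (F y) := by
  have : IsProbabilityMeasure (P.map Y) := Measure.isProbabilityMeasure_map hY.aemeasurable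
  have himage : ∀ s, volume (F '' s) ≤ (L : ℝ≥0∞) ^ d * volume s := by
    simpa only [Fintype.card_fin] using hF.volume_image_le
  exact Measure.exists_eq_withDensity_le_of_le_withDensity <|
    map_le_withDensity_comp_of_map_comp_eq_withDensity hY.aemeasurable hF.continuous.measurable
      himage hdens

theorem density_transfer_lipschitz {Ω : Type*} [MeasureSpace Ω] (P : Measure Ω)
    [IsProbabilityMeasure P] (d : ℕ) (hd : 0 < d)
    (Y : Ω → (Fin d → ℝ)) (hY : Measurable Y)
    (F : (Fin d → ℝ) → (Fin d → ℝ)) (L : NNReal) (hF : LipschitzWith L F)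
    (ρ : (Fin d → ℝ) → ENNReal) (hmeas : Measurable ρ)
    (hdens : Measure.map (fun ω => F (Y ω)) P = volume.withDensity ρ)
    (hloc : ∀ K : Set (Fin d → ℝ), IsCompact K →
      ∃ M : ENNReal, M < ⊤ ∧ ∀ y ∈ K, ρ y ≤ M) :
    ∃ ρY : (Fin d → ℝ) → ENNReal,
      Measure.map Y P = volume.withDensity ρY ∧
      ∀ y, ρY y ≤ (L : ENNReal) ^ d * ρ (F y) :=
  density_transfer_lipschitz_general P d Y hY F L hF ρ hdens
end

section
/- Let β be a progressively measurable real-valued process with |β(t)| ≤ C for all t, let x₀ ≥ z₀ ≥ 0, let W be a Brownian motion and A a continuous increasing adapted process with A(0) = 0. Define X(t) = x₀ + ∫₀^t β(s)ds + W(t) + R_t(X) and Z(t) = z₀ − Ct + W(t) + R_t(Z) − A(t), where R_t(X) = sup_{u≤t} max{0, −(x₀ + ∫₀^u β(s)ds + W(u))} and R_t(Z) = sup_{u≤t} max{0, −(z₀ − Cu + W(u) − A(u))} are the Skorokhod reflection terms at 0. Then Z(t) ≤ X(t) for all t ≥ 0, almost surely. -/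
open MeasureTheory ProbabilityTheory

/-- `W` is a standard one-dimensional Brownian motion under `P`. -/
def IsStandardBM {Ω : Type*} [MeasurableSpace Ω] (P : Measure Ω) (W : ℝ → Ω → ℝ) : Prop :=
  (∀ᵐ ω ∂P, W 0 ω = 0 ∧ Continuous fun t => W t ω) ∧
  (∀ s t : ℝ, 0 ≤ s → s ≤ t →
    Measure.map (fun ω => W t ω - W s ω) P = gaussianReal 0 (Real.toNNReal (t - s))) ∧
  (∀ (n : ℕ) (τ : Fin (n + 1) → ℝ), Monotone τ →
    iIndepFun
      (fun i : Fin n => fun ω => W (τ i.succ) ω - W (τ i.castSucc) ω) P)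

/-!
The comparison holds path by path. The Brownian increments cancel in the difference of the
unreflected paths `F = x₀ + ∫β + W` and `G = z₀ - Ct + W - A`, leaving
`F - G = x₀ - z₀ + (∫β + Ct) + A`, which is nondecreasing because `β ≥ -C` and `A` increases,
and nonnegative at `0`. For such a pair every `max 0 (-G u)`, `u ≤ t`, is at most
`(F t - G t) + max 0 (-F u)`, so `G t + R_t(G) ≤ F t + R_t(F)`.
-/

open Set

/-- The Skorokhod reflection term `R_t(f)` at `0`. -/
noncomputable def reflectionTerm (f : ℝ → ℝ) (t : ℝ) : ℝ :=
  sSup ((fun u => max 0 (-f u)) '' Icc 0 t)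

lemma le_reflectionTerm {f : ℝ → ℝ} {t u : ℝ} (hf : ContinuousOn f (Icc 0 t))
    (hu : u ∈ Icc 0 t) : max 0 (-f u) ≤ reflectionTerm f t :=
  le_csSup ((isCompact_Icc.image_of_continuousOn
    (continuousOn_const.sup hf.neg)).bddAbove) (mem_image_of_mem _ hu)

theorem add_reflectionTerm_le {f g : ℝ → ℝ} {t : ℝ} (ht : 0 ≤ t)
    (hf : ContinuousOn f (Icc 0 t)) (hmono : MonotoneOn (f - g) (Icc 0 t))
    (h0 : g 0 ≤ f 0) : g t + reflectionTerm g t ≤ f t + reflectionTerm f t := by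
  have hgap : ∀ u ∈ Icc 0 t, f u - g u ≤ f t - g t := fun u hu =>
    hmono hu (right_mem_Icc.mpr (hu.1.trans hu.2)) hu.2
  have hgap_nonneg : 0 ≤ f t - g t := by
    linarith [hgap 0 (left_mem_Icc.mpr ht)]
  have hRf_nonneg : 0 ≤ reflectionTerm f t :=
    (le_max_left _ _).trans (le_reflectionTerm hf (left_mem_Icc.mpr ht))
  suffices reflectionTerm g t ≤ f t - g t + reflectionTerm f t by linarith
  refine Real.sSup_le ?_ (by linarith)
  rintro _ ⟨u, hu, rfl⟩
  have hRf := (le_max_right _ _).trans (le_reflectionTerm hf hu)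
  exact max_le (by linarith) (by linarith [hgap u hu])

theorem monotone_integral_add_mul {f : ℝ → ℝ} {c : ℝ} (hf : ∀ s, -c ≤ f s)
    (hint : ∀ u, IntervalIntegrable f volume 0 u) :
    Monotone fun u => (∫ s in (0 : ℝ)..u, f s) + c * u := by
  intro u v huv
  have hsplit : (∫ s in (0 : ℝ)..u, f s) + (∫ s in u..v, f s) = ∫ s in (0 : ℝ)..v, f s :=
    intervalIntegral.integral_add_adjacent_intervals (hint u) ((hint u).symm.trans (hint v))
  have hlow : ∫ s in u..v, (-c) ≤ ∫ s in u..v, f s :=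
    intervalIntegral.integral_mono_on huv intervalIntegrable_const
      ((hint u).symm.trans (hint v)) fun s _ => hf s
  rw [intervalIntegral.integral_const, smul_eq_mul] at hlow
  dsimp only
  linarith

theorem reflected_comparison_general {Ω : Type*} [MeasurableSpace Ω] (P : Measure Ω)
    (C x₀ z₀ : ℝ) (hx₀ : z₀ ≤ x₀)
    (W β A : ℝ → Ω → ℝ)
    (hW : IsStandardBM P W)
    (hβ : ∀ t ω, |β t ω| ≤ C)
    (hβint : ∀ ω u, IntervalIntegrable (fun s => β s ω) volume 0 u)
    (hA : ∀ᵐ ω ∂P, A 0 ω = 0 ∧ Continuous (fun t => A t ω) ∧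
      MonotoneOn (fun t => A t ω) (Set.Ici 0))
    (X Z RX RZ : ℝ → Ω → ℝ)
    (hRX : ∀ t ω, RX t ω = sSup ((fun u =>
      max 0 (-(x₀ + (∫ s in (0 : ℝ)..u, β s ω) + W u ω))) '' Set.Icc 0 t))
    (hRZ : ∀ t ω, RZ t ω = sSup ((fun u =>
      max 0 (-(z₀ - C * u + W u ω - A u ω))) '' Set.Icc 0 t))
    (hX : ∀ t ω, X t ω = x₀ + (∫ s in (0 : ℝ)..t, β s ω) + W t ω + RX t ω)
    (hZ : ∀ t ω, Z t ω = z₀ - C * t + W t ω + RZ t ω - A t ω) :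
    ∀ᵐ ω ∂P, ∀ t : ℝ, 0 ≤ t → Z t ω ≤ X t ω := by
  filter_upwards [hW.1, hA] with ω hWω hAω t ht
  obtain ⟨-, hWcont⟩ := hWω
  obtain ⟨hA0, -, hAmono⟩ := hAω
  set F : ℝ → ℝ := fun u => x₀ + (∫ s in (0 : ℝ)..u, β s ω) + W u ω
  set G : ℝ → ℝ := fun u => z₀ - C * u + W u ω - A u ω
  have hFcont : Continuous F := (continuous_const.add (intervalIntegral.continuous_primitive
    (fun a b => (hβint ω a).symm.trans (hβint ω b)) 0)).add hWcont
  have hdrift := monotone_integral_add_mul (fun s => (abs_le.mp (hβ s ω)).1) (hβint ω)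
  have hgap : MonotoneOn (F - G) (Icc 0 t) := by
    intro u hu v hv huv
    have := hdrift huv
    have := hAmono hu.1 hv.1 huv
    simp only [Pi.sub_apply, F, G]
    linarith
  have h0 : G 0 ≤ F 0 := by
    simp only [F, G, intervalIntegral.integral_same, hA0]
    linarith
  calc Z t ω = G t + reflectionTerm G t := by rw [hZ, hRZ, reflectionTerm]; ring
    _ ≤ F t + reflectionTerm F t := add_reflectionTerm_le ht hFcont.continuousOn hgap h0
    _ = X t ω := by rw [hX, hRX, reflectionTerm]

theorem reflected_comparison {Ω : Type*} [MeasurableSpace Ω] (P : Measure Ω)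
    [IsProbabilityMeasure P]
    (C x₀ z₀ : ℝ) (hC : 0 ≤ C) (hx₀ : z₀ ≤ x₀) (hz₀ : 0 ≤ z₀)
    (W β A : ℝ → Ω → ℝ)
    (hW : IsStandardBM P W)
    (hβ : ∀ t ω, |β t ω| ≤ C)
    (hβint : ∀ ω u, IntervalIntegrable (fun s => β s ω) volume 0 u)
    (hA : ∀ᵐ ω ∂P, A 0 ω = 0 ∧ Continuous (fun t => A t ω) ∧
      MonotoneOn (fun t => A t ω) (Set.Ici 0))
    (X Z RX RZ : ℝ → Ω → ℝ)
    (hRX : ∀ t ω, RX t ω = sSup ((fun u =>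
      max 0 (-(x₀ + (∫ s in (0 : ℝ)..u, β s ω) + W u ω))) '' Set.Icc 0 t))
    (hRZ : ∀ t ω, RZ t ω = sSup ((fun u =>
      max 0 (-(z₀ - C * u + W u ω - A u ω))) '' Set.Icc 0 t))
    (hX : ∀ t ω, X t ω = x₀ + (∫ s in (0 : ℝ)..t, β s ω) + W t ω + RX t ω)
    (hZ : ∀ t ω, Z t ω = z₀ - C * t + W t ω + RZ t ω - A t ω) :
    ∀ᵐ ω ∂P, ∀ t : ℝ, 0 ≤ t → Z t ω ≤ X t ω :=
  reflected_comparison_general P C x₀ z₀ hx₀ W β A hW hβ hβint hA X Z RX RZ hRX hRZ hX hZ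
end

section
/- Pathwise Skorokhod comparison: let f, g : [0,∞) → ℝ be continuous with f(0) ≥ g(0) ≥ 0 such that f − g is nondecreasing (i.e. f(t) − f(s) ≥ g(t) − g(s) for s ≤ t). Define the reflected paths x(t) = f(t) + sup_{u≤t} max{0, −f(u)} and z(t) = g(t) + sup_{u≤t} max{0, −g(u)}. Then z(t) ≤ x(t) for all t ≥ 0. -/
theorem skorokhod_comparison (f g : ℝ → ℝ)
    (hf : ContinuousOn f (Set.Ici 0)) (hg : ContinuousOn g (Set.Ici 0))
    (h0 : f 0 ≥ g 0) (hg0 : g 0 ≥ 0)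
    (hmono : ∀ s t : ℝ, 0 ≤ s → s ≤ t → g t - g s ≤ f t - f s)
    (x z : ℝ → ℝ)
    (hx : ∀ t, x t = f t + sSup ((fun u => max 0 (-f u)) '' Set.Icc 0 t))
    (hz : ∀ t, z t = g t + sSup ((fun u => max 0 (-g u)) '' Set.Icc 0 t)) :
    ∀ t : ℝ, 0 ≤ t → z t ≤ x t := by
  intro t ht
  rw [hx, hz]
  have hfg : ∀ u, 0 ≤ u → g u ≤ f u := by
    intro u hu
    have := hmono 0 u le_rfl hu
    linarith
  set Sf := sSup ((fun u => max 0 (-f u)) '' Set.Icc 0 t) with hSf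
  have hbdd : BddAbove ((fun u => max 0 (-f u)) '' Set.Icc 0 t) := by
    apply IsCompact.bddAbove
    apply IsCompact.image_of_continuousOn isCompact_Icc
    exact continuousOn_const.sup (hf.mono (Set.Icc_subset_Ici_self)).neg
  have hne : (Set.Icc (0:ℝ) t).Nonempty := ⟨0, le_rfl, ht⟩
  have hSf0 : 0 ≤ Sf :=
    le_trans (le_max_left 0 (-f 0)) (le_csSup hbdd ⟨0, ⟨le_rfl, ht⟩, rfl⟩)
  have key : sSup ((fun u => max 0 (-g u)) '' Set.Icc 0 t) ≤ Sf + (f t - g t) := by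
    apply csSup_le (hne.image _)
    rintro y ⟨u, ⟨hu0, hut⟩, rfl⟩
    rcases le_or_gt (-g u) 0 with h | h
    · have hmax : max 0 (-g u) = 0 := max_eq_left h
      have := hfg t ht
      simp only [hmax]
      linarith
    · have h1 : -g u ≤ -f u + (f t - g t) := by
        have := hmono u t hu0 hut; linarith
      have h2 : -f u ≤ Sf :=
        le_trans (le_max_right 0 (-f u)) (le_csSup hbdd ⟨u, ⟨hu0, hut⟩, rfl⟩)
      calc max 0 (-g u) = -g u := max_eq_right h.le
        _ ≤ Sf + (f t - g t) := by linarith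
  linarith [key]
end
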